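/- If ψ∈𝔐_∞^+, then for every n∈ℕ one has lim_{k→∞} k·ψ(n+k) = 0. -/

import Mathlib

open Real MeasureTheory Filter

noncomputable section

/-- `ω` is a modulus of continuity: continuous, nondecreasing, subadditive on `[0,∞)`,
nonnegative, and `ω 0 = 0`. -/
def IsModulus (ω : ℝ → ℝ) : Prop :=
  ContinuousOn ω (Set.Ici 0) ∧ MonotoneOn ω (Set.Ici 0) ∧
  (∀ s t : ℝ, 0 ≤ s → 0 ≤ t → ω (s + t) ≤ ω s + ω t) ∧ ω 0 = 0 ∧
  ∀ t : ℝ, 0 ≤ t → 0 ≤ ω t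

/-- `ψ` belongs to `𝔐_∞^+`, where `η t = ψ⁻¹(ψ t / 2)` (i.e. `η t ≥ t` and
`ψ (η t) = ψ t / 2`) and `μ t = t / (η t − t)` is nondecreasing and tends to `∞`. -/
def IsMInfPlus (ψ η : ℝ → ℝ) : Prop :=
  (∀ t ≥ (1:ℝ), 0 < ψ t) ∧ ContinuousOn ψ (Set.Ici 1) ∧
  ConvexOn ℝ (Set.Ici 1) ψ ∧ Tendsto ψ atTop (nhds 0) ∧
  (∀ t ≥ (1:ℝ), t < η t ∧ ψ (η t) = ψ t / 2) ∧
  MonotoneOn (fun t => t / (η t - t)) (Set.Ici 1) ∧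
  Tendsto (fun t => t / (η t - t)) atTop atTop

open Topology

/-! Once `μ ≥ 3`, i.e. `η t ≤ 4t/3`, the function `ψ` halves (at least) each time its argument is
multiplied by `4/3`. Hence `ψ t = O(t^{-α})` with `α = log 2 / log (4/3) > 1`, and in particular
`t ψ t → 0`. -/

/-- The slope of `f` on `[x, y]` is at most its slope on `[y, z]`, which tends to `0` as `z → ∞`. -/
theorem ConvexOn.antitoneOn_of_tendsto {f : ℝ → ℝ} {a L : ℝ} (hf : ConvexOn ℝ (Set.Ici a) f)
    (hlim : Tendsto f atTop (𝓝 L)) : AntitoneOn f (Set.Ici a) := by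
  intro x hx y hy hxy
  rcases hxy.eq_or_lt with rfl | hxy
  · rfl
  have hslope : Tendsto (fun z => (f z - f y) / (z - y)) atTop (𝓝 0) :=
    (hlim.sub_const _).div_atTop (tendsto_atTop_add_const_right _ _ tendsto_id)
  have hle : (f y - f x) / (y - x) ≤ 0 :=
    ge_of_tendsto hslope <| (eventually_gt_atTop y).mono fun z hz =>
      hf.slope_mono_adjacent hx (Set.mem_Ici.2 (le_trans hy hz.le)) hxy hz
  linarith [(div_le_iff₀ (sub_pos.2 hxy)).1 hle]

section Halving

variable {ψ : ℝ → ℝ} {a c : ℝ}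

theorem le_div_two_pow_of_scale_half (ha : 0 < a) (hc : 1 ≤ c) (hanti : AntitoneOn ψ (Set.Ici a))
    (hhalf : ∀ t ≥ a, ψ (c * t) ≤ ψ t / 2) (j : ℕ) {t : ℝ} (ht : c ^ j * a ≤ t) :
    ψ t ≤ ψ a / 2 ^ j := by
  induction j generalizing t with
  | zero =>
    rw [pow_zero, one_mul] at ht
    simpa using hanti Set.self_mem_Ici (Set.mem_Ici.2 ht) ht
  | succ j ih =>
    have hc0 : 0 < c := by linarith
    have hs : c ^ j * a ≤ t / c := by
      rwa [le_div_iff₀ hc0, mul_right_comm, ← pow_succ]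
    have hsa : a ≤ t / c := le_trans (le_mul_of_one_le_left ha.le (one_le_pow₀ hc)) hs
    calc ψ t = ψ (c * (t / c)) := by rw [mul_div_cancel₀ _ hc0.ne']
      _ ≤ ψ (t / c) / 2 := hhalf _ hsa
      _ ≤ ψ a / 2 ^ j / 2 := by gcongr; exact ih hs
      _ = ψ a / 2 ^ (j + 1) := by rw [pow_succ, div_div]

theorem mul_le_geometric_of_scale_half (ha : 0 < a) (hc : 1 < c) (hc2 : c < 2)
    (hanti : AntitoneOn ψ (Set.Ici a)) (hnonneg : ∀ t ≥ a, 0 ≤ ψ t)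
    (hhalf : ∀ t ≥ a, ψ (c * t) ≤ ψ t / 2) (J : ℕ) {t : ℝ} (ht : c ^ J * a ≤ t) :
    t * ψ t ≤ c * a * ψ a * (c / 2) ^ J := by
  have hta : a ≤ t := le_trans (le_mul_of_one_le_left ha.le (one_le_pow₀ hc.le)) ht
  obtain ⟨j, hjt, htj⟩ := exists_nat_pow_near ((one_le_div ha).2 hta) hc
  have hJj : J ≤ j := by
    have : c ^ J < c ^ (j + 1) := lt_of_le_of_lt ((le_div_iff₀ ha).2 ht) htj
    have := (pow_lt_pow_iff_right₀ hc).1 this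
    omega
  have hψa : 0 ≤ ψ a := hnonneg a le_rfl
  calc t * ψ t ≤ (c ^ (j + 1) * a) * (ψ a / 2 ^ j) := by
        gcongr ?_ * ?_
        · exact hnonneg t hta
        · exact ((div_lt_iff₀ ha).1 htj).le
        · exact le_div_two_pow_of_scale_half ha hc.le hanti hhalf j ((le_div_iff₀ ha).1 hjt)
    _ = c * a * ψ a * (c / 2) ^ j := by rw [div_pow, pow_succ]; field_simp
    _ ≤ c * a * ψ a * (c / 2) ^ J :=
        mul_le_mul_of_nonneg_left (pow_le_pow_of_le_one (by positivity) (by linarith) hJj)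
          (mul_nonneg (by positivity) hψa)

theorem tendsto_mul_of_scale_half (ha : 0 < a) (hc : 1 < c) (hc2 : c < 2)
    (hanti : AntitoneOn ψ (Set.Ici a)) (hnonneg : ∀ t ≥ a, 0 ≤ ψ t)
    (hhalf : ∀ t ≥ a, ψ (c * t) ≤ ψ t / 2) : Tendsto (fun t => t * ψ t) atTop (𝓝 0) := by
  have hgeom : Tendsto (fun J : ℕ => c * a * ψ a * (c / 2) ^ J) atTop (𝓝 0) := by
    simpa using (tendsto_pow_atTop_nhds_zero_of_lt_one (by positivity) (by linarith)).const_mul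
      (c * a * ψ a)
  refine tendsto_order.2 ⟨fun b hb => ?_, fun b hb => ?_⟩
  · filter_upwards [eventually_ge_atTop a] with t ht
    exact hb.trans_le (mul_nonneg (ha.le.trans ht) (hnonneg t ht))
  · obtain ⟨J, hJ⟩ := (hgeom.eventually (gt_mem_nhds hb)).exists
    filter_upwards [eventually_ge_atTop (c ^ J * a)] with t ht
    exact (mul_le_geometric_of_scale_half ha hc hc2 hanti hnonneg hhalf J ht).trans_lt hJ

end Halving

namespace IsMInfPlus

variable {ψ η : ℝ → ℝ}

theorem antitoneOn (hψ : IsMInfPlus ψ η) : AntitoneOn ψ (Set.Ici 1) :=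
  hψ.2.2.1.antitoneOn_of_tendsto hψ.2.2.2.1

theorem exists_scale_half (hψ : IsMInfPlus ψ η) :
    ∃ a ≥ (1 : ℝ), ∀ t ≥ a, ψ (4 / 3 * t) ≤ ψ t / 2 := by
  have hanti := hψ.antitoneOn
  obtain ⟨-, -, -, -, hη, -, hμ⟩ := hψ
  obtain ⟨b, hb⟩ := eventually_atTop.1 (hμ.eventually_ge_atTop 3)
  refine ⟨max b 1, le_max_right _ _, fun t ht => ?_⟩
  have ht1 : 1 ≤ t := le_trans (le_max_right _ _) ht
  obtain ⟨hlt, hhalf⟩ := hη t ht1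
  have hη_le : η t ≤ 4 / 3 * t := by
    have := (le_div_iff₀ (sub_pos.2 hlt)).1 (hb t (le_trans (le_max_left _ _) ht))
    linarith
  rw [← hhalf]
  exact hanti (Set.mem_Ici.2 (ht1.trans hlt.le)) (Set.mem_Ici.2 (by linarith)) hη_le

theorem tendsto_mul_self (hψ : IsMInfPlus ψ η) : Tendsto (fun t => t * ψ t) atTop (𝓝 0) := by
  obtain ⟨a, ha, hhalf⟩ := hψ.exists_scale_half
  exact tendsto_mul_of_scale_half (by linarith) (by norm_num) (by norm_num)
    (hψ.antitoneOn.mono (Set.Ici_subset_Ici.2 ha)) (fun t ht => (hψ.1 t (ha.trans ht)).le) hhalf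

end IsMInfPlus

/-- If `ψ ∈ 𝔐_∞^+`, then `lim_{k→∞} k·ψ(n+k) = 0` for every `n ∈ ℕ`. -/
theorem statement13 (ψ η : ℝ → ℝ) (hψ : IsMInfPlus ψ η) (n : ℕ) :
    Tendsto (fun k : ℕ => (k : ℝ) * ψ ((n : ℝ) + k)) atTop (nhds 0) := by
  have harg : Tendsto (fun k : ℕ => (n : ℝ) + k) atTop atTop :=
    tendsto_atTop_add_const_left _ _ tendsto_natCast_atTop_atTop
  have hψ_nonneg : ∀ᶠ k : ℕ in atTop, 0 ≤ ψ ((n : ℝ) + k) :=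
    (harg.eventually_ge_atTop 1).mono fun k hk => (hψ.1 _ hk).le
  refine squeeze_zero' ?_ ?_ (hψ.tendsto_mul_self.comp harg)
  · filter_upwards [hψ_nonneg] with k hk using mul_nonneg k.cast_nonneg hk
  · filter_upwards [hψ_nonneg] with k hk using mul_le_mul_of_nonneg_right (by simp) hk
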